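/- arXiv:math/0307130 — 6 statements merged into one kernel-verified Lean document; each statement's English description precedes it below -/
import Mathlib

section
/- Let n be a positive integer, let x, y_1, …, y_n be vectors in H, and let c_1, …, c_n be complex numbers. Then |∑_{i=1}^n c_i (x, y_i)|^2 ≤ ‖x‖^2 · ∑_{i=1}^n |c_i|^2 (∑_{j=1}^n |(y_i, y_j)|) ≤ ‖x‖^2 · (∑_{i=1}^n |c_i|^2) · max_{1≤i≤n} (∑_{j=1}^n |(y_i, y_j)|). (Pečarić's inequality.) -/
/-!
Put `v = ∑ i, c i • y i`, so that `∑ i, c i * ⟪x, y i⟫ = ⟪x, v⟫` and Cauchy–Schwarz gives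
`|⟪x, v⟫|² ≤ ‖x‖² ‖v‖²`. Expanding `‖v‖² = ∑ i j, conj (c i) c j ⟪y i, y j⟫` and applying
`|c i| |c j| ≤ (|c i|² + |c j|²) / 2` to each term, the symmetry of `|⟪y i, y j⟫|` in `i, j`
collects the two halves into `∑ i, |c i|² ∑ j, |⟪y i, y j⟫|`. The second inequality bounds each
row sum by the largest one.
-/

open Finset

lemma sum_sum_mul_mul_le_sum_sq_mul_sum {ι : Type*} [Fintype ι] (a : ι → ℝ) (t : ι → ι → ℝ)
    (ht : ∀ i j, 0 ≤ t i j) (ht_symm : ∀ i j, t i j = t j i) :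
    ∑ i, ∑ j, a i * a j * t i j ≤ ∑ i, a i ^ 2 * ∑ j, t i j := by
  have h_swap : ∑ i, ∑ j, a j ^ 2 * t i j = ∑ i, ∑ j, a i ^ 2 * t i j := by
    rw [sum_comm]
    exact sum_congr rfl fun i _ => sum_congr rfl fun j _ => by rw [ht_symm]
  calc ∑ i, ∑ j, a i * a j * t i j
      ≤ ∑ i, ∑ j, (a i ^ 2 * t i j + a j ^ 2 * t i j) / 2 := by
        gcongr with i _ j _
        nlinarith [mul_nonneg (sq_nonneg (a i - a j)) (ht i j)]
    _ = (∑ i, ∑ j, a i ^ 2 * t i j + ∑ i, ∑ j, a j ^ 2 * t i j) / 2 := by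
        simp only [add_div, sum_add_distrib, sum_div]
    _ = ∑ i, a i ^ 2 * ∑ j, t i j := by
        rw [h_swap, add_self_div_two]
        simp only [mul_sum]

section InnerProductSpace

variable {𝕜 E ι : Type*} [RCLike 𝕜] [NormedAddCommGroup E] [InnerProductSpace 𝕜 E] [Fintype ι]

local notation "⟪" x ", " y "⟫" => inner 𝕜 x y

lemma norm_sum_smul_sq_le (c : ι → 𝕜) (y : ι → E) :
    ‖∑ i, c i • y i‖ ^ 2 ≤ ∑ i, ‖c i‖ ^ 2 * ∑ j, ‖⟪y i, y j⟫‖ := by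
  set v := ∑ i, c i • y i
  have h_expand : ⟪v, v⟫ = ∑ i, ∑ j, starRingEnd 𝕜 (c i) * c j * ⟪y i, y j⟫ := by
    simp only [v, sum_inner, inner_sum, inner_smul_left, inner_smul_right, mul_sum]
    rw [sum_comm]
    exact sum_congr rfl fun i _ => sum_congr rfl fun j _ => by ring
  calc ‖v‖ ^ 2 = ‖⟪v, v⟫‖ := by
        rw [inner_self_eq_norm_sq_to_K, norm_pow, RCLike.norm_ofReal, abs_norm]
    _ ≤ ∑ i, ∑ j, ‖c i‖ * ‖c j‖ * ‖⟪y i, y j⟫‖ := by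
        rw [h_expand]
        refine (norm_sum_le _ _).trans (sum_le_sum fun i _ => (norm_sum_le _ _).trans_eq ?_)
        simp only [norm_mul, RCLike.norm_conj]
    _ ≤ ∑ i, ‖c i‖ ^ 2 * ∑ j, ‖⟪y i, y j⟫‖ :=
        sum_sum_mul_mul_le_sum_sq_mul_sum _ _ (fun _ _ => norm_nonneg _)
          (fun i j => norm_inner_symm (y i) (y j))

lemma norm_sum_mul_inner_sq_le (x : E) (c : ι → 𝕜) (y : ι → E) :
    ‖∑ i, c i * ⟪x, y i⟫‖ ^ 2 ≤ ‖x‖ ^ 2 * ∑ i, ‖c i‖ ^ 2 * ∑ j, ‖⟪y i, y j⟫‖ := by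
  have h_inner : ∑ i, c i * ⟪x, y i⟫ = ⟪x, ∑ i, c i • y i⟫ := by
    simp only [inner_sum, inner_smul_right]
  calc ‖∑ i, c i * ⟪x, y i⟫‖ ^ 2 ≤ (‖x‖ * ‖∑ i, c i • y i‖) ^ 2 := by
        rw [h_inner]
        gcongr
        exact norm_inner_le_norm x _
    _ = ‖x‖ ^ 2 * ‖∑ i, c i • y i‖ ^ 2 := mul_pow _ _ _
    _ ≤ ‖x‖ ^ 2 * ∑ i, ‖c i‖ ^ 2 * ∑ j, ‖⟪y i, y j⟫‖ := by
        gcongr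
        exact norm_sum_smul_sq_le c y

end InnerProductSpace

lemma sum_mul_le_sum_mul_sup' {ι : Type*} [Fintype ι] (hι : (univ : Finset ι).Nonempty)
    (w r : ι → ℝ) (hw : ∀ i, 0 ≤ w i) :
    ∑ i, w i * r i ≤ (∑ i, w i) * univ.sup' hι r := by
  rw [sum_mul]
  exact sum_le_sum fun i hi => mul_le_mul_of_nonneg_left (le_sup' r hi) (hw i)

theorem stmt_0 {H : Type*} [NormedAddCommGroup H] [InnerProductSpace ℂ H]
    {n : ℕ} (hn : 0 < n) (x : H) (y : Fin n → H) (c : Fin n → ℂ) :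
    (‖(∑ i, c i * (inner ℂ x (y i) : ℂ))‖) ^ 2 ≤ ‖x‖ ^ 2 * (∑ i, (‖c i‖) ^ 2 * (∑ j, ‖(inner ℂ (y i) (y j) : ℂ)‖)) ∧ ‖x‖ ^ 2 * (∑ i, (‖c i‖) ^ 2 * (∑ j, ‖(inner ℂ (y i) (y j) : ℂ)‖)) ≤ ‖x‖ ^ 2 * (∑ i, (‖c i‖) ^ 2) * (Finset.univ.sup' (Finset.univ_nonempty_iff.mpr (Fin.pos_iff_nonempty.mp hn)) (fun i => (∑ j, ‖(inner ℂ (y i) (y j) : ℂ)‖))) := by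
  refine ⟨norm_sum_mul_inner_sq_le x c y, ?_⟩
  rw [mul_assoc]
  gcongr
  exact sum_mul_le_sum_mul_sup' _ _ _ fun i => sq_nonneg ‖c i‖
end

section
/- Let n be a positive integer, let z_1, …, z_n be vectors in H, let α_1, …, α_n be complex numbers, and let p > 1 and q satisfy 1/p + 1/q = 1. Then ‖∑_{i=1}^n α_i z_i‖^2 ≤ (∑_{i=1}^n |α_i|^p (∑_{j=1}^n |(z_i, z_j)|))^{1/p} · (∑_{i=1}^n |α_i|^q (∑_{j=1}^n |(z_i, z_j)|))^{1/q}. -/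
/-!
Expanding the square and applying the triangle inequality bounds `‖∑ aᵢ zᵢ‖²` by
`∑ᵢⱼ |aᵢ| |aⱼ| mᵢⱼ` with `mᵢⱼ = |(zᵢ, zⱼ)|`. Splitting `mᵢⱼ = mᵢⱼ^(1/p) mᵢⱼ^(1/q)` and applying
Hölder's inequality on the index set of pairs `(i, j)` gives the bound, the second factor being
rewritten with the symmetry `mᵢⱼ = mⱼᵢ`.
-/

open Finset Real

theorem norm_sum_smul_sq_le_sum_sum {𝕜 E ι : Type*} [RCLike 𝕜] [NormedAddCommGroup E]
    [InnerProductSpace 𝕜 E] [Fintype ι] (a : ι → 𝕜) (z : ι → E) :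
    ‖∑ i, a i • z i‖ ^ 2 ≤
      ∑ i, ∑ j, ‖a i‖ * ‖a j‖ * ‖(inner 𝕜 (z i) (z j) : 𝕜)‖ := by
  rw [← inner_self_eq_norm_sq (𝕜 := 𝕜)]
  refine (RCLike.re_le_norm _).trans ?_
  rw [sum_inner]
  refine (norm_sum_le _ _).trans (sum_le_sum fun i _ => ?_)
  rw [inner_sum]
  refine (norm_sum_le _ _).trans (sum_le_sum fun j _ => ?_)
  rw [inner_smul_left, inner_smul_right, norm_mul, norm_mul, RCLike.norm_conj, mul_assoc]

theorem mul_rpow_one_div_rpow {x m p : ℝ} (hx : 0 ≤ x) (hm : 0 ≤ m) (hp : p ≠ 0) :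
    (x * m ^ (1 / p)) ^ p = x ^ p * m := by
  rw [mul_rpow hx (rpow_nonneg hm _), ← rpow_mul hm, one_div_mul_cancel hp, rpow_one]

theorem sum_sum_mul_kernel_le {ι : Type*} [Fintype ι] {p q : ℝ} (hpq : p.HolderConjugate q)
    {x y : ι → ℝ} {m : ι → ι → ℝ} (hx : ∀ i, 0 ≤ x i) (hy : ∀ j, 0 ≤ y j)
    (hm : ∀ i j, 0 ≤ m i j) :
    ∑ i, ∑ j, x i * y j * m i j ≤
      (∑ i, x i ^ p * ∑ j, m i j) ^ (1 / p) * (∑ j, y j ^ q * ∑ i, m i j) ^ (1 / q) := by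
  have holder := inner_le_Lp_mul_Lq_of_nonneg (univ : Finset (ι × ι))
    (f := fun ij => x ij.1 * m ij.1 ij.2 ^ (1 / p))
    (g := fun ij => y ij.2 * m ij.1 ij.2 ^ (1 / q)) hpq
    (fun ij _ => mul_nonneg (hx _) (rpow_nonneg (hm _ _) _))
    (fun ij _ => mul_nonneg (hy _) (rpow_nonneg (hm _ _) _))
  have exponents : 1 / p + 1 / q = 1 := by simpa only [one_div] using hpq.inv_add_inv_eq_one
  have split (i j : ι) :
      x i * m i j ^ (1 / p) * (y j * m i j ^ (1 / q)) = x i * y j * m i j := by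
    rw [mul_mul_mul_comm, ← rpow_add' (hm i j) (by rw [exponents]; exact one_ne_zero), exponents,
      rpow_one]
  have swap : ∑ i, ∑ j, y j ^ q * m i j = ∑ j, y j ^ q * ∑ i, m i j := by
    rw [sum_comm]
    simp only [mul_sum]
  simp only [Fintype.sum_prod_type, split, mul_rpow_one_div_rpow (hx _) (hm _ _) hpq.ne_zero,
    mul_rpow_one_div_rpow (hy _) (hm _ _) hpq.symm.ne_zero, ← mul_sum] at holder
  rwa [swap] at holder

theorem stmt_3_general {H : Type*} [NormedAddCommGroup H] [InnerProductSpace ℂ H]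
    {n : ℕ} (z : Fin n → H) (a : Fin n → ℂ) (p q : ℝ) (hp : 1 < p) (hpq : 1 / p + 1 / q = 1) :
    ‖∑ i, a i • z i‖ ^ 2 ≤ (∑ i, ‖a i‖ ^ p * (∑ j, ‖(inner ℂ (z i) (z j) : ℂ)‖)) ^ (1 / p) * (∑ i, ‖a i‖ ^ q * (∑ j, ‖(inner ℂ (z i) (z j) : ℂ)‖)) ^ (1 / q) := by
  have hpq' : p.HolderConjugate q :=
    holderConjugate_iff.mpr ⟨hp, by simpa only [one_div] using hpq⟩
  calc ‖∑ i, a i • z i‖ ^ 2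
      ≤ ∑ i, ∑ j, ‖a i‖ * ‖a j‖ * ‖(inner ℂ (z i) (z j) : ℂ)‖ := norm_sum_smul_sq_le_sum_sum a z
    _ ≤ _ := by
      simpa only [norm_inner_symm (z _) (z _)] using
        sum_sum_mul_kernel_le hpq' (fun i => norm_nonneg (a i)) (fun j => norm_nonneg (a j))
          (fun i j => norm_nonneg (inner ℂ (z i) (z j)))

theorem stmt_3 {H : Type*} [NormedAddCommGroup H] [InnerProductSpace ℂ H]
    {n : ℕ} (hn : 0 < n) (z : Fin n → H) (a : Fin n → ℂ) (p q : ℝ) (hp : 1 < p) (hpq : 1 / p + 1 / q = 1) :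
    ‖∑ i, a i • z i‖ ^ 2 ≤ (∑ i, ‖a i‖ ^ p * (∑ j, ‖(inner ℂ (z i) (z j) : ℂ)‖)) ^ (1 / p) * (∑ i, ‖a i‖ ^ q * (∑ j, ‖(inner ℂ (z i) (z j) : ℂ)‖)) ^ (1 / q) :=
  stmt_3_general z a p q hp hpq
end

section
/- Let n be a positive integer, let z_1, …, z_n be vectors in H, let α_1, …, α_n be complex numbers, let p > 1 and q satisfy 1/p + 1/q = 1, and let γ > 1 and δ satisfy 1/γ + 1/δ = 1. Then ‖∑_{i=1}^n α_i z_i‖^2 ≤ max_{1≤i≤n} |α_i| · (∑_{i=1}^n |α_i|^{γq})^{1/(γq)} · (∑_{i=1}^n ∑_{j=1}^n |(z_i, z_j)|)^{1/p} · (∑_{i=1}^n (∑_{j=1}^n |(z_i, z_j)|)^{δ})^{1/(δq)}. -/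
/-!
Expanding the square gives `‖∑ aᵢ zᵢ‖² ≤ ∑ᵢ ∑ⱼ |aᵢ| |aⱼ| |(zᵢ, zⱼ)| ≤ max |aⱼ| · ∑ᵢ |aᵢ| Sᵢ` with
`Sᵢ = ∑ⱼ |(zᵢ, zⱼ)|`. Hölder's inequality with exponents `p, q` and weights `Sᵢ` bounds
`∑ᵢ |aᵢ| Sᵢ` by `(∑ Sᵢ)^{1/p} (∑ |aᵢ|^q Sᵢ)^{1/q}`, and Hölder with exponents `γ, δ` bounds the
last sum by `(∑ |aᵢ|^{γq})^{1/γ} (∑ Sᵢ^δ)^{1/δ}`.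
-/

open Finset

section
variable {ι 𝕜 E : Type*} [Fintype ι] [RCLike 𝕜] [NormedAddCommGroup E] [InnerProductSpace 𝕜 E]

theorem norm_sum_smul_sq_le_sum_sum_norm_inner (a : ι → 𝕜) (z : ι → E) :
    ‖∑ i, a i • z i‖ ^ 2 ≤ ∑ i, ∑ j, ‖a i‖ * ‖a j‖ * ‖inner 𝕜 (z i) (z j)‖ := by
  calc ‖∑ i, a i • z i‖ ^ 2 = ‖inner 𝕜 (∑ i, a i • z i) (∑ j, a j • z j)‖ := by
        rw [← inner_self_re_eq_norm, inner_self_eq_norm_sq]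
    _ = ‖∑ i, ∑ j, (starRingEnd 𝕜) (a i) * (a j * inner 𝕜 (z i) (z j))‖ := by
        rw [sum_inner]
        simp only [inner_sum, inner_smul_left, inner_smul_right, mul_left_comm (a _)]
    _ ≤ ∑ i, ∑ j, ‖(starRingEnd 𝕜) (a i) * (a j * inner 𝕜 (z i) (z j))‖ :=
        (norm_sum_le _ _).trans (sum_le_sum fun i _ => norm_sum_le _ _)
    _ = ∑ i, ∑ j, ‖a i‖ * ‖a j‖ * ‖inner 𝕜 (z i) (z j)‖ := by
        simp only [norm_mul, RCLike.norm_conj, mul_assoc]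

theorem norm_sum_smul_sq_le_mul_sum_norm_mul_sum_norm_inner (a : ι → 𝕜) (z : ι → E) {M : ℝ}
    (hM : ∀ i, ‖a i‖ ≤ M) :
    ‖∑ i, a i • z i‖ ^ 2 ≤ M * ∑ i, ‖a i‖ * ∑ j, ‖inner 𝕜 (z i) (z j)‖ := by
  refine (norm_sum_smul_sq_le_sum_sum_norm_inner a z).trans ?_
  simp only [mul_sum]
  refine sum_le_sum fun i _ => sum_le_sum fun j _ => ?_
  calc ‖a i‖ * ‖a j‖ * ‖inner 𝕜 (z i) (z j)‖ ≤ ‖a i‖ * M * ‖inner 𝕜 (z i) (z j)‖ := by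
        gcongr; exact hM j
    _ = M * (‖a i‖ * ‖inner 𝕜 (z i) (z j)‖) := by ring

end

theorem sum_mul_le_iterated_holder {ι : Type*} [Fintype ι] (A S : ι → ℝ)
    (hA : ∀ i, 0 ≤ A i) (hS : ∀ i, 0 ≤ S i) {p q g d : ℝ} (hpq : p.HolderConjugate q)
    (hgd : g.HolderConjugate d) :
    ∑ i, A i * S i ≤
      (∑ i, A i ^ (g * q)) ^ (1 / (g * q)) * (∑ i, S i) ^ (1 / p) *
        (∑ i, S i ^ d) ^ (1 / (d * q)) := by
  have hAS : ∑ i, A i * S i ≤ (∑ i, S i) ^ (1 / p) * (∑ i, A i ^ q * S i) ^ (1 / q) := by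
    simpa only [hpq.symm.one_sub_inv, one_div, mul_comm (S _)] using
      Real.inner_le_weight_mul_Lp_of_nonneg univ hpq.symm.lt.le S A hS hA
  have hAqS : ∑ i, A i ^ q * S i ≤ (∑ i, A i ^ (g * q)) ^ (1 / g) * (∑ i, S i ^ d) ^ (1 / d) := by
    simpa only [← Real.rpow_mul (hA _), mul_comm q g] using
      Real.inner_le_Lp_mul_Lq_of_nonneg univ hgd (fun i _ => Real.rpow_nonneg (hA i) q)
        (fun i _ => hS i)
  have hAgq : 0 ≤ ∑ i, A i ^ (g * q) := sum_nonneg fun i _ => Real.rpow_nonneg (hA i) _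
  have hSd : 0 ≤ ∑ i, S i ^ d := sum_nonneg fun i _ => Real.rpow_nonneg (hS i) _
  calc ∑ i, A i * S i ≤ (∑ i, S i) ^ (1 / p) * (∑ i, A i ^ q * S i) ^ (1 / q) := hAS
    _ ≤ (∑ i, S i) ^ (1 / p) *
          ((∑ i, A i ^ (g * q)) ^ (1 / g) * (∑ i, S i ^ d) ^ (1 / d)) ^ (1 / q) := by
        refine mul_le_mul_of_nonneg_left (Real.rpow_le_rpow ?_ hAqS hpq.symm.one_div_nonneg)
          (Real.rpow_nonneg (sum_nonneg fun i _ => hS i) _)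
        exact sum_nonneg fun i _ => mul_nonneg (Real.rpow_nonneg (hA i) _) (hS i)
    _ = _ := by
        rw [Real.mul_rpow (Real.rpow_nonneg hAgq _) (Real.rpow_nonneg hSd _),
          ← Real.rpow_mul hAgq, ← Real.rpow_mul hSd, div_mul_div_comm, div_mul_div_comm,
          one_mul]
        ring

theorem stmt_5 {H : Type*} [NormedAddCommGroup H] [InnerProductSpace ℂ H]
    {n : ℕ} (hn : 0 < n) (z : Fin n → H) (a : Fin n → ℂ) (p q : ℝ) (hp : 1 < p) (hpq : 1 / p + 1 / q = 1) (g d : ℝ) (hg : 1 < g) (hgd : 1 / g + 1 / d = 1) :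
    ‖∑ i, a i • z i‖ ^ 2 ≤ (Finset.univ.sup' (Finset.univ_nonempty_iff.mpr (Fin.pos_iff_nonempty.mp hn)) (fun i => ‖a i‖)) * (∑ i, (‖a i‖) ^ (g * q)) ^ (1 / (g * q)) * (∑ i, ∑ j, ‖(inner ℂ (z i) (z j) : ℂ)‖) ^ (1 / p) * (∑ i, (∑ j, ‖(inner ℂ (z i) (z j) : ℂ)‖) ^ d) ^ (1 / (d * q)) := by
  have hpq' : p.HolderConjugate q :=
    Real.holderConjugate_iff.mpr ⟨hp, by simpa only [one_div] using hpq⟩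
  have hgd' : g.HolderConjugate d :=
    Real.holderConjugate_iff.mpr ⟨hg, by simpa only [one_div] using hgd⟩
  set M := univ.sup' _ fun i => ‖a i‖
  have hM : ∀ i, ‖a i‖ ≤ M := fun i => le_sup' (fun i => ‖a i‖) (mem_univ i)
  calc ‖∑ i, a i • z i‖ ^ 2 ≤ M * ∑ i, ‖a i‖ * ∑ j, ‖inner ℂ (z i) (z j)‖ :=
        norm_sum_smul_sq_le_mul_sum_norm_mul_sum_norm_inner a z hM
    _ ≤ M * ((∑ i, ‖a i‖ ^ (g * q)) ^ (1 / (g * q)) * (∑ i, ∑ j, ‖inner ℂ (z i) (z j)‖) ^ (1 / p) *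
          (∑ i, (∑ j, ‖inner ℂ (z i) (z j)‖) ^ d) ^ (1 / (d * q))) := by
        gcongr
        · exact (norm_nonneg _).trans (hM ⟨0, hn⟩)
        · exact sum_mul_le_iterated_holder _ _ (fun i => norm_nonneg _)
            (fun i => sum_nonneg fun j _ => norm_nonneg _) hpq' hgd'
    _ = _ := by ring
end

section
/- Let n be a positive integer, let z_1, …, z_n be vectors in H, let α_1, …, α_n be complex numbers, and let p > 1 and q satisfy 1/p + 1/q = 1. Then ‖∑_{i=1}^n α_i z_i‖^2 ≤ max_{1≤i≤n} |α_i| · (∑_{i=1}^n |α_i|^q)^{1/q} · (∑_{i=1}^n ∑_{j=1}^n |(z_i, z_j)|)^{1/p} · (max_{1≤i≤n} ∑_{j=1}^n |(z_i, z_j)|)^{1/q}. -/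
/-!
Expanding the square gives `‖∑ aᵢ zᵢ‖² ≤ ∑ᵢ ∑ⱼ |aᵢ| |aⱼ| |(zᵢ, zⱼ)|`. Bounding `|aⱼ|` by `max |a|`
leaves `max |a| · ∑ᵢ |aᵢ| Sᵢ` with row sums `Sᵢ = ∑ⱼ |(zᵢ, zⱼ)|`. Hölder's inequality bounds
`∑ᵢ |aᵢ| Sᵢ` by `‖a‖_q ‖S‖_p`, and `‖S‖_p^p = ∑ Sᵢ · Sᵢ^(p-1) ≤ (∑ Sᵢ) (max S)^(p-1)`.
-/

open Finset

section InnerProduct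

variable {𝕜 E ι : Type*} [RCLike 𝕜] [NormedAddCommGroup E] [InnerProductSpace 𝕜 E]

theorem norm_sum_smul_sq_le_sum_sum_norm_mul_norm_inner (s : Finset ι) (a : ι → 𝕜) (z : ι → E) :
    ‖∑ i ∈ s, a i • z i‖ ^ 2 ≤ ∑ i ∈ s, ∑ j ∈ s, ‖a i‖ * ‖a j‖ * ‖inner 𝕜 (z i) (z j)‖ := by
  have h_expand : inner 𝕜 (∑ i ∈ s, a i • z i) (∑ j ∈ s, a j • z j)
      = ∑ i ∈ s, ∑ j ∈ s, starRingEnd 𝕜 (a i) * (a j * inner 𝕜 (z i) (z j)) := by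
    simp_rw [sum_inner, inner_smul_left, inner_sum, inner_smul_right, mul_sum]
  calc ‖∑ i ∈ s, a i • z i‖ ^ 2 = ‖inner 𝕜 (∑ i ∈ s, a i • z i) (∑ j ∈ s, a j • z j)‖ := by
        rw [inner_self_eq_norm_sq_to_K, norm_pow, RCLike.norm_ofReal, abs_norm]
    _ ≤ _ := by
        rw [h_expand]
        refine (norm_sum_le _ _).trans (sum_le_sum fun i _ => (norm_sum_le _ _).trans_eq ?_)
        simp only [norm_mul, RCLike.norm_conj, mul_assoc]

end InnerProduct

section RealSums

variable {ι : Type*} {s : Finset ι}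

theorem sum_sum_mul_mul_le_sup'_mul_sum_mul_sum (hs : s.Nonempty) {x : ι → ℝ} {b : ι → ι → ℝ}
    (hx : ∀ i ∈ s, 0 ≤ x i) (hb : ∀ i ∈ s, ∀ j ∈ s, 0 ≤ b i j) :
    ∑ i ∈ s, ∑ j ∈ s, x i * x j * b i j ≤ s.sup' hs x * ∑ i ∈ s, x i * ∑ j ∈ s, b i j := by
  rw [mul_sum]
  refine sum_le_sum fun i hi => ?_
  rw [mul_sum, mul_sum]
  refine sum_le_sum fun j hj => ?_
  calc x i * x j * b i j = x i * (x j * b i j) := mul_assoc _ _ _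
    _ ≤ x i * (s.sup' hs x * b i j) := by
        gcongr
        · exact hx i hi
        · exact hb i hi j hj
        · exact le_sup' x hj
    _ = s.sup' hs x * (x i * b i j) := by ring

theorem sum_rpow_le_sum_mul_sup'_rpow (hs : s.Nonempty) {S : ι → ℝ} (hS : ∀ i ∈ s, 0 ≤ S i)
    {p : ℝ} (hp : 1 ≤ p) :
    ∑ i ∈ s, S i ^ p ≤ (∑ i ∈ s, S i) * s.sup' hs S ^ (p - 1) := by
  rw [sum_mul]
  refine sum_le_sum fun i hi => ?_
  calc S i ^ p = S i * S i ^ (p - 1) := by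
        rw [← Real.rpow_one_add' (hS i hi) (by linarith), add_sub_cancel]
    _ ≤ S i * s.sup' hs S ^ (p - 1) :=
        mul_le_mul_of_nonneg_left (Real.rpow_le_rpow (hS i hi) (le_sup' S hi) (by linarith)) (hS i hi)

theorem rpow_sum_rpow_le_rpow_sum_mul_sup'_rpow (hs : s.Nonempty) {S : ι → ℝ}
    (hS : ∀ i ∈ s, 0 ≤ S i) {p q : ℝ} (hpq : p.HolderConjugate q) :
    (∑ i ∈ s, S i ^ p) ^ (1 / p) ≤ (∑ i ∈ s, S i) ^ (1 / p) * s.sup' hs S ^ (1 / q) := by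
  obtain ⟨i₀, hi₀⟩ := hs
  have hsup : 0 ≤ s.sup' ⟨i₀, hi₀⟩ S := (hS i₀ hi₀).trans (le_sup' S hi₀)
  have hexp : (p - 1) * (1 / p) = 1 / q := by
    rw [one_div, one_div, sub_mul, one_mul, mul_inv_cancel₀ hpq.ne_zero, hpq.one_sub_inv]
  calc (∑ i ∈ s, S i ^ p) ^ (1 / p)
      ≤ ((∑ i ∈ s, S i) * s.sup' ⟨i₀, hi₀⟩ S ^ (p - 1)) ^ (1 / p) :=
        Real.rpow_le_rpow (sum_nonneg fun i hi => Real.rpow_nonneg (hS i hi) p)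
          (sum_rpow_le_sum_mul_sup'_rpow _ hS hpq.lt.le) hpq.one_div_nonneg
    _ = (∑ i ∈ s, S i) ^ (1 / p) * s.sup' ⟨i₀, hi₀⟩ S ^ (1 / q) := by
        rw [Real.mul_rpow (sum_nonneg hS) (Real.rpow_nonneg hsup _), ← Real.rpow_mul hsup, hexp]

end RealSums

theorem stmt_6 {H : Type*} [NormedAddCommGroup H] [InnerProductSpace ℂ H]
    {n : ℕ} (hn : 0 < n) (z : Fin n → H) (a : Fin n → ℂ) (p q : ℝ) (hp : 1 < p) (hpq : 1 / p + 1 / q = 1) :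
    ‖∑ i, a i • z i‖ ^ 2 ≤ (Finset.univ.sup' (Finset.univ_nonempty_iff.mpr (Fin.pos_iff_nonempty.mp hn)) (fun i => ‖a i‖)) * (∑ i, (‖a i‖) ^ q) ^ (1 / q) * (∑ i, ∑ j, ‖(inner ℂ (z i) (z j) : ℂ)‖) ^ (1 / p) * (Finset.univ.sup' (Finset.univ_nonempty_iff.mpr (Fin.pos_iff_nonempty.mp hn)) (fun i => (∑ j, ‖(inner ℂ (z i) (z j) : ℂ)‖))) ^ (1 / q) := by
  have hne : (univ : Finset (Fin n)).Nonempty := univ_nonempty_iff.mpr (Fin.pos_iff_nonempty.mp hn)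
  have hpq' : p.HolderConjugate q := Real.holderConjugate_iff.mpr ⟨hp, by simpa only [one_div] using hpq⟩
  set S : Fin n → ℝ := fun i => ∑ j, ‖(inner ℂ (z i) (z j) : ℂ)‖
  have hS : ∀ i ∈ univ, 0 ≤ S i := fun i _ => sum_nonneg fun j _ => norm_nonneg _
  have hM : 0 ≤ univ.sup' hne (fun i => ‖a i‖) :=
    (norm_nonneg _).trans (le_sup' (fun i => ‖a i‖) (mem_univ ⟨0, hn⟩))
  calc ‖∑ i, a i • z i‖ ^ 2
      ≤ univ.sup' hne (fun i => ‖a i‖) * ∑ i, ‖a i‖ * S i :=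
        (norm_sum_smul_sq_le_sum_sum_norm_mul_norm_inner _ a z).trans
          (sum_sum_mul_mul_le_sup'_mul_sum_mul_sum hne (fun i _ => norm_nonneg _)
            fun i _ j _ => norm_nonneg _)
    _ ≤ univ.sup' hne (fun i => ‖a i‖) * ((∑ i, ‖a i‖ ^ q) ^ (1 / q) * (∑ i, S i ^ p) ^ (1 / p)) := by
        gcongr
        exact Real.inner_le_Lp_mul_Lq_of_nonneg univ hpq'.symm (fun i _ => norm_nonneg _) hS
    _ ≤ univ.sup' hne (fun i => ‖a i‖) * ((∑ i, ‖a i‖ ^ q) ^ (1 / q) *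
          ((∑ i, S i) ^ (1 / p) * univ.sup' hne S ^ (1 / q))) := by
        gcongr
        exact rpow_sum_rpow_le_rpow_sum_mul_sup'_rpow hne hS hpq'
    _ = _ := by ring
end

section
/- Let n be a positive integer, let z_1, …, z_n be vectors in H, let α_1, …, α_n be complex numbers, let p > 1 and q satisfy 1/p + 1/q = 1, and let α > 1 and β satisfy 1/α + 1/β = 1. Then ‖∑_{i=1}^n α_i z_i‖^2 ≤ max_{1≤i≤n} |α_i| · (∑_{i=1}^n |α_i|^{αp})^{1/(αp)} · (∑_{i=1}^n ∑_{j=1}^n |(z_i, z_j)|)^{1/q} · (∑_{i=1}^n (∑_{j=1}^n |(z_i, z_j)|)^{β})^{1/(pβ)}. -/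
/-!
Expanding `‖∑ αᵢ zᵢ‖² = ∑ᵢⱼ conj αᵢ αⱼ (zᵢ, zⱼ)` and bounding `|αⱼ|` by the maximum gives
`‖∑ αᵢ zᵢ‖² ≤ max |αᵢ| · ∑ᵢ |αᵢ| mᵢ` with `mᵢ = ∑ⱼ |(zᵢ, zⱼ)|`. Hölder's inequality with
weights `mᵢ` bounds `∑ᵢ |αᵢ| mᵢ` by `(∑ mᵢ)^(1/q) (∑ |αᵢ|^p mᵢ)^(1/p)`, and Hölder's inequality
with exponents `α, β` bounds the last sum by `(∑ |αᵢ|^(αp))^(1/α) (∑ mᵢ^β)^(1/β)`.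
-/

open Finset

section InnerProductSpace

variable {𝕜 E ι : Type*} [RCLike 𝕜] [NormedAddCommGroup E] [InnerProductSpace 𝕜 E]

theorem norm_sum_smul_sq_le_mul_sum_norm_inner (s : Finset ι) (a : ι → 𝕜) (z : ι → E)
    {M : ℝ} (hM : ∀ i ∈ s, ‖a i‖ ≤ M) :
    ‖∑ i ∈ s, a i • z i‖ ^ 2 ≤ M * ∑ i ∈ s, ‖a i‖ * ∑ j ∈ s, ‖(inner 𝕜 (z i) (z j) : 𝕜)‖ := by
  set x := ∑ i ∈ s, a i • z i
  have hx : inner 𝕜 x x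
      = ∑ i ∈ s, ∑ j ∈ s, (starRingEnd 𝕜) (a i) * (a j * inner 𝕜 (z i) (z j)) := by
    simp only [x, sum_inner, inner_sum, inner_smul_left, inner_smul_right, mul_sum]
    rw [sum_comm]
    exact sum_congr rfl fun i _ => sum_congr rfl fun j _ => by ring
  calc ‖x‖ ^ 2 = ‖(inner 𝕜 x x : 𝕜)‖ :=
        (inner_self_eq_norm_sq (𝕜 := 𝕜) x).symm.trans (inner_self_re_eq_norm x)
    _ ≤ ∑ i ∈ s, ∑ j ∈ s, ‖a i‖ * (‖a j‖ * ‖(inner 𝕜 (z i) (z j) : 𝕜)‖) := by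
        rw [hx]
        refine (norm_sum_le _ _).trans (sum_le_sum fun i _ => (norm_sum_le _ _).trans_eq ?_)
        simp only [norm_mul, RCLike.norm_conj]
    _ ≤ ∑ i ∈ s, ∑ j ∈ s, ‖a i‖ * (M * ‖(inner 𝕜 (z i) (z j) : 𝕜)‖) := by
        gcongr with i _ j hj
        exact hM j hj
    _ = M * ∑ i ∈ s, ‖a i‖ * ∑ j ∈ s, ‖(inner 𝕜 (z i) (z j) : 𝕜)‖ := by
        simp only [mul_sum]
        exact sum_congr rfl fun i _ => sum_congr rfl fun j _ => by ring

end InnerProductSpace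

namespace Real

theorem inner_le_Lrp_mul_L1_mul_Ls_of_nonneg {ι : Type*} (t : Finset ι) {f w : ι → ℝ}
    {p q r s : ℝ} (hpq : p.HolderConjugate q) (hrs : r.HolderConjugate s)
    (hf : ∀ i, 0 ≤ f i) (hw : ∀ i, 0 ≤ w i) :
    ∑ i ∈ t, f i * w i ≤ (∑ i ∈ t, f i ^ (r * p)) ^ (1 / (r * p)) * (∑ i ∈ t, w i) ^ (1 / q)
      * (∑ i ∈ t, w i ^ s) ^ (1 / (p * s)) := by
  have weighted : ∑ i ∈ t, w i * f i
      ≤ (∑ i ∈ t, w i) ^ (1 / q) * (∑ i ∈ t, w i * f i ^ p) ^ (1 / p) := by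
    simpa only [hpq.one_sub_inv, one_div] using
      inner_le_weight_mul_Lp_of_nonneg t hpq.lt.le w f hw hf
  have holder : ∑ i ∈ t, w i * f i ^ p
      ≤ (∑ i ∈ t, f i ^ (r * p)) ^ (1 / r) * (∑ i ∈ t, w i ^ s) ^ (1 / s) := by
    have := inner_le_Lp_mul_Lq_of_nonneg t hrs (f := fun i => f i ^ p) (g := w)
      (fun i _ => rpow_nonneg (hf i) p) (fun i _ => hw i)
    simpa only [mul_comm (w _), ← rpow_mul (hf _), mul_comm p r] using this
  have hA : 0 ≤ ∑ i ∈ t, f i ^ (r * p) := sum_nonneg fun i _ => rpow_nonneg (hf i) _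
  have hB : 0 ≤ ∑ i ∈ t, w i ^ s := sum_nonneg fun i _ => rpow_nonneg (hw i) _
  calc ∑ i ∈ t, f i * w i = ∑ i ∈ t, w i * f i := sum_congr rfl fun i _ => mul_comm _ _
    _ ≤ (∑ i ∈ t, w i) ^ (1 / q) * (∑ i ∈ t, w i * f i ^ p) ^ (1 / p) := weighted
    _ ≤ (∑ i ∈ t, w i) ^ (1 / q)
          * ((∑ i ∈ t, f i ^ (r * p)) ^ (1 / r) * (∑ i ∈ t, w i ^ s) ^ (1 / s)) ^ (1 / p) := by
        gcongr
        · exact rpow_nonneg (sum_nonneg fun i _ => hw i) _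
        · exact sum_nonneg fun i _ => mul_nonneg (hw i) (rpow_nonneg (hf i) p)
        · exact hpq.one_div_nonneg
    _ = _ := by
        rw [mul_rpow (rpow_nonneg hA _) (rpow_nonneg hB _), ← rpow_mul hA, ← rpow_mul hB,
          div_mul_div_comm, div_mul_div_comm, one_mul, mul_comm s p]
        ring

end Real

theorem stmt_7 {H : Type*} [NormedAddCommGroup H] [InnerProductSpace ℂ H]
    {n : ℕ} (hn : 0 < n) (z : Fin n → H) (a : Fin n → ℂ) (p q : ℝ) (hp : 1 < p) (hpq : 1 / p + 1 / q = 1) (r s : ℝ) (hr : 1 < r) (hrs : 1 / r + 1 / s = 1) :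
    ‖∑ i, a i • z i‖ ^ 2 ≤ (Finset.univ.sup' (Finset.univ_nonempty_iff.mpr (Fin.pos_iff_nonempty.mp hn)) (fun i => ‖a i‖)) * (∑ i, (‖a i‖) ^ (r * p)) ^ (1 / (r * p)) * (∑ i, ∑ j, ‖(inner ℂ (z i) (z j) : ℂ)‖) ^ (1 / q) * (∑ i, (∑ j, ‖(inner ℂ (z i) (z j) : ℂ)‖) ^ s) ^ (1 / (p * s)) := by
  have hpq' : p.HolderConjugate q :=
    Real.holderConjugate_iff.mpr ⟨hp, by simpa only [one_div] using hpq⟩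
  have hrs' : r.HolderConjugate s :=
    Real.holderConjugate_iff.mpr ⟨hr, by simpa only [one_div] using hrs⟩
  set M := (univ : Finset (Fin n)).sup' (univ_nonempty_iff.mpr (Fin.pos_iff_nonempty.mp hn))
    fun i => ‖a i‖
  have hM : ∀ i, ‖a i‖ ≤ M := fun i => le_sup' (fun i => ‖a i‖) (mem_univ i)
  refine (norm_sum_smul_sq_le_mul_sum_norm_inner univ a z fun i _ => hM i).trans ?_
  rw [mul_assoc M, mul_assoc M]
  gcongr
  · exact (norm_nonneg _).trans (hM ⟨0, hn⟩)
  · exact Real.inner_le_Lrp_mul_L1_mul_Ls_of_nonneg _ hpq' hrs' (fun _ => norm_nonneg _)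
      fun _ => sum_nonneg fun _ _ => norm_nonneg _
end

section
/- Let n be a positive integer, let z_1, …, z_n be vectors in H, let α_1, …, α_n be complex numbers, and let p > 1 and q satisfy 1/p + 1/q = 1. Then ‖∑_{i=1}^n α_i z_i‖^2 ≤ (∑_{i=1}^n |α_i|^p)^{1/p} · (∑_{i=1}^n |α_i|^q)^{1/q} · max_{1≤i≤n} (∑_{j=1}^n |(z_i, z_j)|). -/
/-! Expanding the square gives `‖∑ αᵢ zᵢ‖² ≤ ∑ᵢⱼ |αᵢ| |αⱼ| cᵢⱼ` with `cᵢⱼ = |(zᵢ, zⱼ)|`.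
Writing `cᵢⱼ = cᵢⱼ^(1/p) cᵢⱼ^(1/q)` and applying Hölder's inequality over the pairs `(i, j)`
bounds this by `(∑ᵢⱼ cᵢⱼ |αᵢ|^p)^(1/p) (∑ᵢⱼ cᵢⱼ |αⱼ|^q)^(1/q)` (Schur's test). As `c` is
symmetric, its row and column sums are all at most `M = maxᵢ ∑ⱼ cᵢⱼ`, so the two factors are
at most `(M ∑ |αᵢ|^p)^(1/p)` and `(M ∑ |αⱼ|^q)^(1/q)`, and `M^(1/p) M^(1/q) = M`. -/

open Finset

theorem norm_sum_smul_sq_le_s9 {𝕜 E ι : Type*} [RCLike 𝕜] [NormedAddCommGroup E]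
    [InnerProductSpace 𝕜 E] (s : Finset ι) (a : ι → 𝕜) (z : ι → E) :
    ‖∑ i ∈ s, a i • z i‖ ^ 2 ≤ ∑ i ∈ s, ∑ j ∈ s, ‖a i‖ * ‖a j‖ * ‖(inner 𝕜 (z i) (z j) : 𝕜)‖ := by
  have expand : (inner 𝕜 (∑ i ∈ s, a i • z i) (∑ i ∈ s, a i • z i) : 𝕜)
      = ∑ i ∈ s, ∑ j ∈ s, star (a i) * a j * inner 𝕜 (z i) (z j) := by
    rw [sum_inner]
    refine sum_congr rfl fun i _ => ?_
    rw [inner_sum]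
    refine sum_congr rfl fun j _ => ?_
    rw [inner_smul_left, inner_smul_right, mul_assoc]
    rfl
  calc ‖∑ i ∈ s, a i • z i‖ ^ 2
      = ‖(inner 𝕜 (∑ i ∈ s, a i • z i) (∑ i ∈ s, a i • z i) : 𝕜)‖ := by
        rw [inner_self_eq_norm_sq_to_K, norm_pow, RCLike.norm_ofReal, abs_norm]
    _ ≤ ∑ i ∈ s, ∑ j ∈ s, ‖star (a i) * a j * inner 𝕜 (z i) (z j)‖ := by
        rw [expand]
        exact (norm_sum_le _ _).trans (sum_le_sum fun i _ => norm_sum_le _ _)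
    _ = _ := by simp only [norm_mul, norm_star]

theorem Real.HolderConjugate.rpow_one_div_mul_rpow_one_div {p q x : ℝ}
    (hpq : p.HolderConjugate q) (hx : 0 ≤ x) : x ^ (1 / p) * x ^ (1 / q) = x := by
  rw [← Real.rpow_add' hx (by simp [hpq.inv_add_inv_eq_one]), one_div, one_div,
    hpq.inv_add_inv_eq_one, Real.rpow_one]

theorem Real.inner_le_weight_mul_Lp_mul_Lq_of_nonneg {ι : Type*} (s : Finset ι) {p q : ℝ}
    (hpq : p.HolderConjugate q) {w f g : ι → ℝ} (hw : ∀ i ∈ s, 0 ≤ w i)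
    (hf : ∀ i ∈ s, 0 ≤ f i) (hg : ∀ i ∈ s, 0 ≤ g i) :
    ∑ i ∈ s, w i * f i * g i ≤
      (∑ i ∈ s, w i * f i ^ p) ^ (1 / p) * (∑ i ∈ s, w i * g i ^ q) ^ (1 / q) := by
  have split : ∀ i ∈ s, w i * f i * g i = w i ^ (1 / p) * f i * (w i ^ (1 / q) * g i) := by
    intro i hi
    calc w i * f i * g i = w i ^ (1 / p) * w i ^ (1 / q) * f i * g i := by
          rw [hpq.rpow_one_div_mul_rpow_one_div (hw i hi)]
      _ = _ := by ring
  have pow_weight : ∀ {r : ℝ}, 0 < r → ∀ {h : ι → ℝ}, (∀ i ∈ s, 0 ≤ h i) →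
      ∀ i ∈ s, (w i ^ (1 / r) * h i) ^ r = w i * h i ^ r := by
    intro r hr h hh i hi
    rw [Real.mul_rpow (Real.rpow_nonneg (hw i hi) _) (hh i hi), ← Real.rpow_mul (hw i hi),
      one_div_mul_cancel hr.ne', Real.rpow_one]
  rw [sum_congr rfl split, ← sum_congr rfl (pow_weight hpq.pos hf),
    ← sum_congr rfl (pow_weight hpq.symm.pos hg)]
  exact Real.inner_le_Lp_mul_Lq_of_nonneg s hpq
    (fun i hi => mul_nonneg (Real.rpow_nonneg (hw i hi) _) (hf i hi))
    (fun i hi => mul_nonneg (Real.rpow_nonneg (hw i hi) _) (hg i hi))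

theorem sum_sum_mul_le_Lp_mul_Lq_mul_of_sum_le {ι : Type*} [Fintype ι] {p q M : ℝ}
    (hpq : p.HolderConjugate q) {c : ι → ι → ℝ} {x y : ι → ℝ} (hc : ∀ i j, 0 ≤ c i j) (hx : ∀ i, 0 ≤ x i)
    (hy : ∀ j, 0 ≤ y j) (hM : 0 ≤ M) (hrow : ∀ i, ∑ j, c i j ≤ M) (hcol : ∀ j, ∑ i, c i j ≤ M) :
    ∑ i, ∑ j, x i * y j * c i j ≤ (∑ i, x i ^ p) ^ (1 / p) * (∑ j, y j ^ q) ^ (1 / q) * M := by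
  have hxp : ∀ i, 0 ≤ x i ^ p := fun i => Real.rpow_nonneg (hx i) p
  have hyq : ∀ j, 0 ≤ y j ^ q := fun j => Real.rpow_nonneg (hy j) q
  have row_bound : ∑ ij : ι × ι, c ij.1 ij.2 * x ij.1 ^ p ≤ (∑ i, x i ^ p) * M := by
    rw [Fintype.sum_prod_type, sum_mul]
    refine sum_le_sum fun i _ => ?_
    dsimp only
    rw [← sum_mul, mul_comm]
    exact mul_le_mul_of_nonneg_left (hrow i) (hxp i)
  have col_bound : ∑ ij : ι × ι, c ij.1 ij.2 * y ij.2 ^ q ≤ (∑ j, y j ^ q) * M := by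
    rw [Fintype.sum_prod_type_right, sum_mul]
    refine sum_le_sum fun j _ => ?_
    dsimp only
    rw [← sum_mul, mul_comm]
    exact mul_le_mul_of_nonneg_left (hcol j) (hyq j)
  have holder := Real.inner_le_weight_mul_Lp_mul_Lq_of_nonneg univ hpq
    (w := fun ij : ι × ι => c ij.1 ij.2) (f := fun ij => x ij.1) (g := fun ij => y ij.2) (fun ij _ => hc _ _) (fun ij _ => hx _)
    (fun ij _ => hy _)
  calc ∑ i, ∑ j, x i * y j * c i j = ∑ ij : ι × ι, c ij.1 ij.2 * x ij.1 * y ij.2 := by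
        rw [Fintype.sum_prod_type]
        exact sum_congr rfl fun i _ => sum_congr rfl fun j _ => by ring
    _ ≤ ((∑ i, x i ^ p) * M) ^ (1 / p) * ((∑ j, y j ^ q) * M) ^ (1 / q) := by
        refine holder.trans (mul_le_mul ?_ ?_ (Real.rpow_nonneg ?_ _) (Real.rpow_nonneg ?_ _))
        · exact Real.rpow_le_rpow
            (sum_nonneg fun ij _ => mul_nonneg (hc _ _) (hxp _)) row_bound hpq.one_div_nonneg
        · exact Real.rpow_le_rpow
            (sum_nonneg fun ij _ => mul_nonneg (hc _ _) (hyq _)) col_bound hpq.symm.one_div_nonneg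
        · exact sum_nonneg fun ij _ => mul_nonneg (hc _ _) (hyq _)
        · exact mul_nonneg (sum_nonneg fun i _ => hxp i) hM
    _ = (∑ i, x i ^ p) ^ (1 / p) * (∑ j, y j ^ q) ^ (1 / q) * (M ^ (1 / p) * M ^ (1 / q)) := by
        rw [Real.mul_rpow (sum_nonneg fun i _ => hxp i) hM,
          Real.mul_rpow (sum_nonneg fun j _ => hyq j) hM]
        ring
    _ = _ := by rw [hpq.rpow_one_div_mul_rpow_one_div hM]

theorem stmt_9 {H : Type*} [NormedAddCommGroup H] [InnerProductSpace ℂ H]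
    {n : ℕ} (hn : 0 < n) (z : Fin n → H) (a : Fin n → ℂ) (p q : ℝ) (hp : 1 < p) (hpq : 1 / p + 1 / q = 1) :
    ‖∑ i, a i • z i‖ ^ 2 ≤ (∑ i, (‖a i‖) ^ p) ^ (1 / p) * (∑ i, (‖a i‖) ^ q) ^ (1 / q) * (Finset.univ.sup' (Finset.univ_nonempty_iff.mpr (Fin.pos_iff_nonempty.mp hn)) (fun i => (∑ j, ‖(inner ℂ (z i) (z j) : ℂ)‖))) := by
  have hpq' : p.HolderConjugate q :=
    Real.holderConjugate_iff.mpr ⟨hp, by simpa only [one_div] using hpq⟩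
  have row_le_sup : ∀ i, ∑ j, ‖(inner ℂ (z i) (z j) : ℂ)‖ ≤ Finset.univ.sup'
      (Finset.univ_nonempty_iff.mpr (Fin.pos_iff_nonempty.mp hn))
      (fun i => ∑ j, ‖(inner ℂ (z i) (z j) : ℂ)‖) :=
    fun i => le_sup' (fun i => ∑ j, ‖(inner ℂ (z i) (z j) : ℂ)‖) (mem_univ i)
  refine (norm_sum_smul_sq_le_s9 univ a z).trans <|
    sum_sum_mul_le_Lp_mul_Lq_mul_of_sum_le hpq' (fun i j => norm_nonneg _)
      (fun i => norm_nonneg _) (fun j => norm_nonneg _) ?_ row_le_sup fun j => ?_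
  · exact (sum_nonneg fun j _ => norm_nonneg _).trans (row_le_sup ⟨0, hn⟩)
  · simpa only [norm_inner_symm] using row_le_sup j
end
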